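/- arXiv:1805.11731 — 6 statements merged into one kernel-verified Lean document; each statement's English description precedes it below -/
import Mathlib

section
/- Let α : ℝ^m → (ℝ^m)^* be a smooth one-form, and let γ, δ : [0,1] → ℝ^m be smooth curves with δ(0) = δ(1) = 0. Then the function ε ↦ ∫₀¹ α(γ(t)+εδ(t))(γ'(t)+εδ'(t)) dt is differentiable at ε = 0 with derivative ∫₀¹ dα_{γ(t)}(δ(t), γ'(t)) dt, where dα_x(u,v) := (Dα(x)u)(v) − (Dα(x)v)(u) and Dα(x) denotes the Fréchet derivative of α at x. -/
open MeasureTheory Metric Set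

/-- First variation of the contact action `S[γ] = ∫₀¹ α(γ(t))(γ'(t)) dt`.
For a smooth one-form `α` on `ℝ^m` and smooth curves `γ, δ` with `δ(0) = δ(1) = 0`,
the map `ε ↦ ∫₀¹ α(γ + εδ)(γ' + εδ')` has derivative `∫₀¹ dα_{γ(t)}(δ(t), γ'(t)) dt`
at `ε = 0`, where `dα_x(u,v) = (Dα(x)u)(v) - (Dα(x)v)(u)`. -/
theorem first_variation_contact_action (m : ℕ)
    (α : (Fin m → ℝ) → ((Fin m → ℝ) →L[ℝ] ℝ)) (hα : ContDiff ℝ (⊤ : ℕ∞) α)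
    (γ δ : ℝ → (Fin m → ℝ)) (hγ : ContDiff ℝ (⊤ : ℕ∞) γ) (hδ : ContDiff ℝ (⊤ : ℕ∞) δ)
    (hδ0 : δ 0 = 0) (hδ1 : δ 1 = 0) :
    HasDerivAt
      (fun ε : ℝ => ∫ t in (0:ℝ)..1, α (γ t + ε • δ t) (deriv γ t + ε • deriv δ t))
      (∫ t in (0:ℝ)..1,
        ((fderiv ℝ α (γ t) (δ t)) (deriv γ t) - (fderiv ℝ α (γ t) (deriv γ t)) (δ t)))
      0 := by
  have hγc : Continuous γ := hγ.continuous
  have hδc : Continuous δ := hδ.continuous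
  have hγ' : Continuous (deriv γ) := hγ.continuous_deriv (by simp)
  have hδ' : Continuous (deriv δ) := hδ.continuous_deriv (by simp)
  have hαc : Continuous α := hα.continuous
  have hα' : Continuous (fderiv ℝ α) := hα.continuous_fderiv (by simp)
  set g : ℝ → ℝ → ℝ := fun ε t =>
    (fderiv ℝ α (γ t + ε • δ t) (δ t)) (deriv γ t + ε • deriv δ t)
      + α (γ t + ε • δ t) (deriv δ t) with hg
  -- joint continuity of g
  have hgc : Continuous (fun p : ℝ × ℝ => g p.1 p.2) := by
    have hc : Continuous (fun p : ℝ × ℝ => γ p.2 + p.1 • δ p.2) :=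
      (hγc.comp continuous_snd).add (continuous_fst.smul (hδc.comp continuous_snd))
    have hv : Continuous (fun p : ℝ × ℝ => deriv γ p.2 + p.1 • deriv δ p.2) :=
      (hγ'.comp continuous_snd).add (continuous_fst.smul (hδ'.comp continuous_snd))
    exact (((hα'.comp hc).clm_apply (hδc.comp continuous_snd)).clm_apply hv).add
      ((hαc.comp hc).clm_apply (hδ'.comp continuous_snd))
  -- pointwise derivative in ε
  have hdiff : ∀ t : ℝ, ∀ ε : ℝ,
      HasDerivAt (fun ε : ℝ => α (γ t + ε • δ t) (deriv γ t + ε • deriv δ t)) (g ε t) ε := by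
    intro t ε
    have h1 : HasDerivAt (fun ε : ℝ => γ t + ε • δ t) (δ t) ε := by
      simpa using ((hasDerivAt_id ε).smul_const (δ t)).const_add (γ t)
    have h3 : HasDerivAt (fun ε : ℝ => deriv γ t + ε • deriv δ t) (deriv δ t) ε := by
      simpa using ((hasDerivAt_id ε).smul_const (deriv δ t)).const_add (deriv γ t)
    have h2 : HasDerivAt (fun ε : ℝ => α (γ t + ε • δ t))
        (fderiv ℝ α (γ t + ε • δ t) (δ t)) ε :=
      (hα.differentiable (by simp) (γ t + ε • δ t)).hasFDerivAt.comp_hasDerivAt ε h1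
    exact h2.clm_apply h3
  -- bound
  obtain ⟨C, hC⟩ : ∃ C, ∀ p ∈ (Icc (-1:ℝ) 1 ×ˢ Icc (0:ℝ) 1),
      ‖(fun p : ℝ × ℝ => g p.1 p.2) p‖ ≤ C :=
    (isCompact_Icc.prod isCompact_Icc).exists_bound_of_continuousOn hgc.continuousOn
  have main := intervalIntegral.hasDerivAt_integral_of_dominated_loc_of_deriv_le
    (F := fun ε t => α (γ t + ε • δ t) (deriv γ t + ε • deriv δ t)) (F' := g)
    (x₀ := (0:ℝ)) (a := 0) (b := 1) (bound := fun _ => C) (μ := volume) (ball_mem_nhds (0:ℝ) one_pos)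
    (Filter.Eventually.of_forall fun ε => by
      have : Continuous (fun t => α (γ t + ε • δ t) (deriv γ t + ε • deriv δ t)) :=
        (hαc.comp (hγc.add (hδc.const_smul ε : Continuous fun t => ε • δ t))).clm_apply
          (hγ'.add (hδ'.const_smul ε : Continuous fun t => ε • deriv δ t))
      exact this.aestronglyMeasurable.restrict)
    (by
      have : Continuous (fun t => α (γ t + (0:ℝ) • δ t) (deriv γ t + (0:ℝ) • deriv δ t)) :=
        (hαc.comp (hγc.add (hδc.const_smul (0:ℝ) : Continuous fun t => (0:ℝ) • δ t))).clm_apply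
          (hγ'.add (hδ'.const_smul (0:ℝ) : Continuous fun t => (0:ℝ) • deriv δ t))
      exact this.intervalIntegrable 0 1)
    ((hgc.comp (Continuous.prodMk_right (0:ℝ))).aestronglyMeasurable.restrict)
    (Filter.Eventually.of_forall fun t ht => fun x hx => by
      refine hC (x, t) ⟨?_, ?_⟩
      · have := mem_ball_iff_norm.mp hx
        simp only [sub_zero, Real.norm_eq_abs] at this
        exact ⟨by linarith [neg_abs_le x], by linarith [le_abs_self x]⟩
      · rw [Set.uIoc_of_le (by norm_num : (0:ℝ) ≤ 1)] at ht
        exact ⟨le_of_lt ht.1, ht.2⟩)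
    (intervalIntegrable_const)
    (Filter.Eventually.of_forall fun t _ => fun x _ => hdiff t x)
  have hmain := main.2
  -- identify the two integrals
  have hg0 : ∀ t, g 0 t = (fderiv ℝ α (γ t) (δ t)) (deriv γ t) + α (γ t) (deriv δ t) := by
    intro t; simp [hg]
  -- the exact-term integral vanishes
  have hFTC : (∫ t in (0:ℝ)..1,
      ((fderiv ℝ α (γ t) (deriv γ t)) (δ t) + α (γ t) (deriv δ t))) = 0 := by
    have hderiv : ∀ t ∈ Set.uIcc (0:ℝ) 1, HasDerivAt (fun t => α (γ t) (δ t))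
        ((fderiv ℝ α (γ t) (deriv γ t)) (δ t) + α (γ t) (deriv δ t)) t := by
      intro t _
      have hγt : HasDerivAt γ (deriv γ t) t :=
        (hγ.differentiable (by simp) t).hasDerivAt
      have hδt : HasDerivAt δ (deriv δ t) t :=
        (hδ.differentiable (by simp) t).hasDerivAt
      have hαγ : HasDerivAt (fun t => α (γ t)) (fderiv ℝ α (γ t) (deriv γ t)) t :=
        (hα.differentiable (by simp) (γ t)).hasFDerivAt.comp_hasDerivAt t hγt
      exact hαγ.clm_apply hδt
    have hcont : Continuous (fun t =>
        (fderiv ℝ α (γ t) (deriv γ t)) (δ t) + α (γ t) (deriv δ t)) :=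
      (((hα'.comp hγc).clm_apply hγ').clm_apply hδc).add ((hαc.comp hγc).clm_apply hδ')
    rw [intervalIntegral.integral_eq_sub_of_hasDerivAt hderiv
      (hcont.intervalIntegrable 0 1)]
    simp [hδ0, hδ1]
  have hint1 : IntervalIntegrable (fun t =>
      ((fderiv ℝ α (γ t) (δ t)) (deriv γ t) - (fderiv ℝ α (γ t) (deriv γ t)) (δ t)))
      volume 0 1 :=
    ((((hα'.comp hγc).clm_apply hδc).clm_apply hγ').sub
      (((hα'.comp hγc).clm_apply hγ').clm_apply hδc)).intervalIntegrable 0 1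
  have hint2 : IntervalIntegrable (fun t =>
      ((fderiv ℝ α (γ t) (deriv γ t)) (δ t) + α (γ t) (deriv δ t))) volume 0 1 :=
    ((((hα'.comp hγc).clm_apply hγ').clm_apply hδc).add
      ((hαc.comp hγc).clm_apply hδ')).intervalIntegrable 0 1
  have heq : (∫ t in (0:ℝ)..1, g 0 t)
      = ∫ t in (0:ℝ)..1,
        ((fderiv ℝ α (γ t) (δ t)) (deriv γ t) - (fderiv ℝ α (γ t) (deriv γ t)) (δ t)) := by
    calc (∫ t in (0:ℝ)..1, g 0 t)
        = ∫ t in (0:ℝ)..1,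
            (((fderiv ℝ α (γ t) (δ t)) (deriv γ t)
              - (fderiv ℝ α (γ t) (deriv γ t)) (δ t))
            + ((fderiv ℝ α (γ t) (deriv γ t)) (δ t) + α (γ t) (deriv δ t))) := by
          apply intervalIntegral.integral_congr
          intro t _
          rw [hg0 t]; ring
      _ = (∫ t in (0:ℝ)..1,
            ((fderiv ℝ α (γ t) (δ t)) (deriv γ t)
              - (fderiv ℝ α (γ t) (deriv γ t)) (δ t)))
          + ∫ t in (0:ℝ)..1,
            ((fderiv ℝ α (γ t) (deriv γ t)) (δ t) + α (γ t) (deriv δ t)) :=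
          intervalIntegral.integral_add hint1 hint2
      _ = _ := by rw [hFTC, add_zero]
  rw [heq] at hmain
  exact hmain
end

section
/- Fix ħ > 0 and a smooth potential V : ℝ → ℝ. For smooth Ψ : ℝ⁴ → ℂ with coordinates (p,q,t,S), define D_p Ψ = ∂Ψ/∂p + (i/ħ)SΨ, D_q Ψ = ∂Ψ/∂q − (i/ħ)pΨ − ∂Ψ/∂S, and D_t Ψ = ∂Ψ/∂t + (i/ħ)ĤΨ, where ĤΨ := (1/2)(p²Ψ − 2iħp·∂Ψ/∂S − ħ²·∂²Ψ/∂S²) + V(q+S)Ψ. Then the connection is flat: for every smooth Ψ, D_p(D_qΨ) = D_q(D_pΨ), D_p(D_tΨ) = D_t(D_pΨ), and D_q(D_tΨ) = D_t(D_qΨ). -/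
set_option maxHeartbeats 2000000


open Complex

/-- Coordinates `(p,q,t,S)` on phase-spacetime times the fiber. -/
abbrev PQTS := ℝ × ℝ × ℝ × ℝ

/-- The `p`-component of the quantization connection:
`D_p Ψ = ∂Ψ/∂p + (i/ℏ) S Ψ`. -/
noncomputable def Dp (ℏ : ℝ) (Ψ : PQTS → ℂ) : PQTS → ℂ := fun x =>
  fderiv ℝ Ψ x (1, 0, 0, 0) + (Complex.I / (ℏ : ℂ)) * (x.2.2.2 : ℂ) * Ψ x

/-- The `q`-component of the quantization connection:
`D_q Ψ = ∂Ψ/∂q - (i/ℏ) p Ψ - ∂Ψ/∂S`. -/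
noncomputable def Dq (ℏ : ℝ) (Ψ : PQTS → ℂ) : PQTS → ℂ := fun x =>
  fderiv ℝ Ψ x (0, 1, 0, 0) - (Complex.I / (ℏ : ℂ)) * (x.1 : ℂ) * Ψ x
    - fderiv ℝ Ψ x (0, 0, 0, 1)

/-- The quantized Hamiltonian `Ĥ = (1/2)(p + (ℏ/i) ∂/∂S)² + V(q+S)` acting on the
fiber variable `S`:
`ĤΨ = (1/2)(p²Ψ - 2iℏ p ∂Ψ/∂S - ℏ² ∂²Ψ/∂S²) + V(q+S) Ψ`. -/
noncomputable def Hop (ℏ : ℝ) (V : ℝ → ℝ) (Ψ : PQTS → ℂ) : PQTS → ℂ := fun x =>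
  (1 / 2 : ℂ) * ((x.1 : ℂ) ^ 2 * Ψ x
      - 2 * Complex.I * (ℏ : ℂ) * (x.1 : ℂ) * fderiv ℝ Ψ x (0, 0, 0, 1)
      - (ℏ : ℂ) ^ 2 * fderiv ℝ (fun y => fderiv ℝ Ψ y (0, 0, 0, 1)) x (0, 0, 0, 1))
    + (V (x.2.1 + x.2.2.2) : ℂ) * Ψ x

/-- The `t`-component of the quantization connection:
`D_t Ψ = ∂Ψ/∂t + (i/ℏ) Ĥ Ψ`. -/
noncomputable def Dt (ℏ : ℝ) (V : ℝ → ℝ) (Ψ : PQTS → ℂ) : PQTS → ℂ := fun x =>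
  fderiv ℝ Ψ x (0, 0, 1, 0) + (Complex.I / (ℏ : ℂ)) * Hop ℏ V Ψ x


open ContDiff

-- ===== infrastructure =====
noncomputable def pd (v : PQTS) (f : PQTS → ℂ) : PQTS → ℂ := fun x => fderiv ℝ f x v

def E1 : PQTS := (1, 0, 0, 0)
def E2 : PQTS := (0, 1, 0, 0)
def E3 : PQTS := (0, 0, 1, 0)
def E4 : PQTS := (0, 0, 0, 1)

lemma dd {f : PQTS → ℂ} (h : ContDiff ℝ ∞ f) : Differentiable ℝ f :=
  h.differentiable (by decide)

lemma sm_pd {f : PQTS → ℂ} (h : ContDiff ℝ ∞ f) (v : PQTS) : ContDiff ℝ ∞ (pd v f) :=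
  (ContinuousLinearMap.apply ℝ ℂ v).contDiff.comp (h.fderiv_right (by decide))

lemma pd_swap {f : PQTS → ℂ} (h : ContDiff ℝ ∞ f) (v w : PQTS) :
    pd v (pd w f) = pd w (pd v f) := by
  funext x
  have hs : IsSymmSndFDerivAt ℝ f x :=
    (h.contDiffAt).isSymmSndFDerivAt (by simp only [minSmoothness_of_isRCLikeNormedField]; decide)
  have key : ∀ u u' : PQTS, fderiv ℝ (pd u f) x u' =
      fderiv ℝ (fderiv ℝ f) x u' u := by
    intro u u'
    have hc : DifferentiableAt ℝ (fderiv ℝ f) x :=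
      ((h.fderiv_right (m := ∞) (by decide)).differentiable (by decide)) x
    have h0 : pd u f = fun y => (fderiv ℝ f y) u := rfl
    rw [h0, fderiv_clm_apply hc (differentiableAt_const u)]
    simp
  show fderiv ℝ (pd w f) x v = fderiv ℝ (pd v f) x w
  rw [key, key, hs]

lemma pd_add {f g : PQTS → ℂ} (hf : ContDiff ℝ ∞ f) (hg : ContDiff ℝ ∞ g) (v : PQTS) :
    pd v (fun x => f x + g x) = fun x => pd v f x + pd v g x := by
  funext x; show fderiv ℝ _ x v = _
  rw [fderiv_fun_add ((dd hf) x) ((dd hg) x)]; rfl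

lemma pd_sub {f g : PQTS → ℂ} (hf : ContDiff ℝ ∞ f) (hg : ContDiff ℝ ∞ g) (v : PQTS) :
    pd v (fun x => f x - g x) = fun x => pd v f x - pd v g x := by
  funext x; show fderiv ℝ _ x v = _
  rw [fderiv_fun_sub ((dd hf) x) ((dd hg) x)]; rfl

lemma pd_mul {f g : PQTS → ℂ} (hf : ContDiff ℝ ∞ f) (hg : ContDiff ℝ ∞ g) (v : PQTS) :
    pd v (fun x => f x * g x) = fun x => pd v f x * g x + f x * pd v g x := by
  funext x; show fderiv ℝ _ x v = _
  rw [fderiv_fun_mul ((dd hf) x) ((dd hg) x)]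
  simp [pd]; ring

lemma pd_cmul (c : ℂ) {g : PQTS → ℂ} (hg : ContDiff ℝ ∞ g) (v : PQTS) :
    pd v (fun x => c * g x) = fun x => c * pd v g x := by
  funext x; show fderiv ℝ _ x v = _
  rw [fderiv_const_mul ((dd hg) x)]; rfl

noncomputable def L1 : PQTS →L[ℝ] ℂ :=
  Complex.ofRealCLM.comp (ContinuousLinearMap.fst ℝ ℝ (ℝ × ℝ × ℝ))
noncomputable def LS : PQTS →L[ℝ] ℂ :=
  Complex.ofRealCLM.comp ((ContinuousLinearMap.snd ℝ ℝ ℝ).comp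
    ((ContinuousLinearMap.snd ℝ ℝ (ℝ × ℝ)).comp (ContinuousLinearMap.snd ℝ ℝ (ℝ × ℝ × ℝ))))

lemma sm_cp : ContDiff ℝ ∞ (fun x : PQTS => (x.1 : ℂ)) := L1.contDiff
lemma sm_cS : ContDiff ℝ ∞ (fun x : PQTS => (x.2.2.2 : ℂ)) := LS.contDiff

lemma pd_cp (v : PQTS) : pd v (fun x : PQTS => (x.1 : ℂ)) = fun _ => (v.1 : ℂ) := by
  funext x
  show fderiv ℝ (fun x : PQTS => L1 x) x v = _
  rw [L1.fderiv]; rfl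

lemma pd_cS (v : PQTS) : pd v (fun x : PQTS => (x.2.2.2 : ℂ)) = fun _ => (v.2.2.2 : ℂ) := by
  funext x
  show fderiv ℝ (fun x : PQTS => LS x) x v = _
  rw [LS.fderiv]; rfl

noncomputable def LqS : PQTS →L[ℝ] ℝ :=
  ((ContinuousLinearMap.fst ℝ ℝ (ℝ × ℝ)).comp (ContinuousLinearMap.snd ℝ ℝ (ℝ × ℝ × ℝ))) +
  ((ContinuousLinearMap.snd ℝ ℝ ℝ).comp
    ((ContinuousLinearMap.snd ℝ ℝ (ℝ × ℝ)).comp (ContinuousLinearMap.snd ℝ ℝ (ℝ × ℝ × ℝ))))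

lemma sm_cV {V : ℝ → ℝ} (hV : ContDiff ℝ ∞ V) :
    ContDiff ℝ ∞ (fun x : PQTS => (V (x.2.1 + x.2.2.2) : ℂ)) :=
  Complex.ofRealCLM.contDiff.comp (hV.comp LqS.contDiff)

lemma pd_cV {V : ℝ → ℝ} (hV : ContDiff ℝ ∞ V) (v : PQTS) :
    pd v (fun x : PQTS => (V (x.2.1 + x.2.2.2) : ℂ)) =
    fun x => ((deriv V (x.2.1 + x.2.2.2) : ℝ) : ℂ) * ((v.2.1 + v.2.2.2 : ℝ) : ℂ) := by
  funext x
  have h1 : HasDerivAt V (deriv V (LqS x)) (LqS x) :=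
    ((hV.differentiable (by decide)) (LqS x)).hasDerivAt
  have h2 : HasFDerivAt (fun y : PQTS => V (LqS y)) ((deriv V (LqS x)) • LqS) x :=
    h1.comp_hasFDerivAt x LqS.hasFDerivAt
  have h3 : HasFDerivAt (fun y : PQTS => (V (y.2.1 + y.2.2.2) : ℂ))
      (Complex.ofRealCLM.comp ((deriv V (LqS x)) • LqS)) x :=
    Complex.ofRealCLM.hasFDerivAt.comp x h2
  show fderiv ℝ _ x v = _
  rw [h3.fderiv]
  show ((deriv V (LqS x) * (LqS v) : ℝ) : ℂ) = _
  have : LqS v = v.2.1 + v.2.2.2 := rfl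
  rw [this, show LqS x = x.2.1 + x.2.2.2 from rfl]
  push_cast
  ring

lemma sm_cp2 : ContDiff ℝ ∞ (fun x : PQTS => (x.1 : ℂ) ^ 2) := sm_cp.pow 2

lemma pd_cp2 (v : PQTS) :
    pd v (fun x : PQTS => (x.1 : ℂ) ^ 2) = fun x => 2 * (v.1 : ℂ) * (x.1 : ℂ) := by
  have h : (fun x : PQTS => (x.1 : ℂ) ^ 2) = fun x => (x.1 : ℂ) * (x.1 : ℂ) := by
    funext x; ring
  rw [h, pd_mul sm_cp sm_cp v, pd_cp]
  funext x; simp only []; ring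

section ops
variable {ℏ : ℝ} {V : ℝ → ℝ} {f : PQTS → ℂ}

lemma Dp_eq : Dp ℏ f = fun x =>
    pd E1 f x + Complex.I / (ℏ:ℂ) * (x.2.2.2:ℂ) * f x := rfl
lemma Dq_eq : Dq ℏ f = fun x =>
    pd E2 f x - Complex.I / (ℏ:ℂ) * (x.1:ℂ) * f x - pd E4 f x := rfl
lemma Hop_eq : Hop ℏ V f = fun x =>
    (1/2:ℂ) * ((x.1:ℂ)^2 * f x - 2*Complex.I*(ℏ:ℂ)*(x.1:ℂ) * pd E4 f x
      - (ℏ:ℂ)^2 * pd E4 (pd E4 f) x) + (V (x.2.1+x.2.2.2):ℂ) * f x := rfl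
lemma Dt_eq : Dt ℏ V f = fun x =>
    pd E3 f x + Complex.I / (ℏ:ℂ) * Hop ℏ V f x := rfl

lemma sm_Dp (hf : ContDiff ℝ ∞ f) : ContDiff ℝ ∞ (Dp ℏ f) := by
  rw [Dp_eq]
  exact (sm_pd hf E1).add ((contDiff_const.mul sm_cS).mul hf)

lemma sm_Dq (hf : ContDiff ℝ ∞ f) : ContDiff ℝ ∞ (Dq ℏ f) := by
  rw [Dq_eq]
  exact ((sm_pd hf E2).sub ((contDiff_const.mul sm_cp).mul hf)).sub (sm_pd hf E4)

lemma sm_Hop (hV : ContDiff ℝ ∞ V) (hf : ContDiff ℝ ∞ f) : ContDiff ℝ ∞ (Hop ℏ V f) := by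
  rw [Hop_eq]
  exact (contDiff_const.mul (((sm_cp2.mul hf).sub
      ((contDiff_const.mul sm_cp).mul (sm_pd hf E4))).sub
      (contDiff_const.mul (sm_pd (sm_pd hf E4) E4)))).add ((sm_cV hV).mul hf)

lemma sm_Dt (hV : ContDiff ℝ ∞ V) (hf : ContDiff ℝ ∞ f) : ContDiff ℝ ∞ (Dt ℏ V f) := by
  rw [Dt_eq]
  exact (sm_pd hf E3).add (contDiff_const.mul (sm_Hop hV hf))

lemma pd_Dp (hf : ContDiff ℝ ∞ f) (v : PQTS) :
    pd v (Dp ℏ f) = fun x => pd v (pd E1 f) x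
      + Complex.I / (ℏ:ℂ) * ((v.2.2.2:ℂ) * f x + (x.2.2.2:ℂ) * pd v f x) := by
  rw [Dp_eq, pd_add (sm_pd hf E1) ((contDiff_const.mul sm_cS).mul hf) v,
      pd_mul (contDiff_const.mul sm_cS) hf v,
      pd_cmul (Complex.I / (ℏ:ℂ)) sm_cS v, pd_cS v]
  funext x; simp only []; ring

lemma pd_Dq (hf : ContDiff ℝ ∞ f) (v : PQTS) :
    pd v (Dq ℏ f) = fun x => pd v (pd E2 f) x
      - Complex.I / (ℏ:ℂ) * ((v.1:ℂ) * f x + (x.1:ℂ) * pd v f x)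
      - pd v (pd E4 f) x := by
  rw [Dq_eq, pd_sub ((sm_pd hf E2).sub ((contDiff_const.mul sm_cp).mul hf)) (sm_pd hf E4) v,
      pd_sub (sm_pd hf E2) ((contDiff_const.mul sm_cp).mul hf) v,
      pd_mul (contDiff_const.mul sm_cp) hf v,
      pd_cmul (Complex.I / (ℏ:ℂ)) sm_cp v, pd_cp v]
  funext x; simp only []; ring

lemma pd_Hop (hV : ContDiff ℝ ∞ V) (hf : ContDiff ℝ ∞ f) (v : PQTS) :
    pd v (Hop ℏ V f) = fun x =>
      (1/2:ℂ) * (2*(v.1:ℂ)*(x.1:ℂ) * f x + (x.1:ℂ)^2 * pd v f x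
        - 2*Complex.I*(ℏ:ℂ)*((v.1:ℂ) * pd E4 f x + (x.1:ℂ) * pd v (pd E4 f) x)
        - (ℏ:ℂ)^2 * pd v (pd E4 (pd E4 f)) x)
      + ((deriv V (x.2.1+x.2.2.2):ℝ):ℂ) * ((v.2.1+v.2.2.2:ℝ):ℂ) * f x
      + ((V (x.2.1+x.2.2.2)):ℂ) * pd v f x := by
  have hA : ContDiff ℝ ∞ (fun x : PQTS => (x.1:ℂ)^2 * f x) := sm_cp2.mul hf
  have hB : ContDiff ℝ ∞ (fun x : PQTS => 2*Complex.I*(ℏ:ℂ)*(x.1:ℂ) * pd E4 f x) :=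
    (contDiff_const.mul sm_cp).mul (sm_pd hf E4)
  have hC : ContDiff ℝ ∞ (fun x : PQTS => (ℏ:ℂ)^2 * pd E4 (pd E4 f) x) :=
    contDiff_const.mul (sm_pd (sm_pd hf E4) E4)
  rw [Hop_eq,
      pd_add (contDiff_const.mul ((hA.sub hB).sub hC)) ((sm_cV hV).mul hf) v,
      pd_cmul (1/2:ℂ) ((hA.sub hB).sub hC) v,
      pd_sub (hA.sub hB) hC v, pd_sub hA hB v,
      pd_mul sm_cp2 hf v, pd_cp2 v,
      pd_mul (contDiff_const.mul sm_cp) (sm_pd hf E4) v,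
      pd_cmul (2*Complex.I*(ℏ:ℂ)) sm_cp v, pd_cp v,
      pd_cmul ((ℏ:ℂ)^2) (sm_pd (sm_pd hf E4) E4) v,
      pd_mul (sm_cV hV) hf v, pd_cV hV v]
  funext x; simp only []; ring

lemma pd_Dt (hV : ContDiff ℝ ∞ V) (hf : ContDiff ℝ ∞ f) (v : PQTS) :
    pd v (Dt ℏ V f) = fun x =>
      pd v (pd E3 f) x + Complex.I / (ℏ:ℂ) * pd v (Hop ℏ V f) x := by
  rw [Dt_eq, pd_add (sm_pd hf E3) (contDiff_const.mul (sm_Hop hV hf)) v,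
      pd_cmul (Complex.I / (ℏ:ℂ)) (sm_Hop hV hf) v]

end ops

section ops2
variable {ℏ : ℝ} {V : ℝ → ℝ} {f : PQTS → ℂ}

lemma pd44_Dp (hf : ContDiff ℝ ∞ f) :
    pd E4 (pd E4 (Dp ℏ f)) = fun x => pd E4 (pd E4 (pd E1 f)) x
      + Complex.I / (ℏ:ℂ) * (2 * pd E4 f x + (x.2.2.2:ℂ) * pd E4 (pd E4 f) x) := by
  have hg : ContDiff ℝ ∞ (fun x : PQTS => ((E4.2.2.2:ℝ):ℂ) * f x + (x.2.2.2:ℂ) * pd E4 f x) :=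
    (contDiff_const.mul hf).add (sm_cS.mul (sm_pd hf E4))
  rw [pd_Dp hf E4,
      pd_add (sm_pd (sm_pd hf E1) E4) (contDiff_const.mul hg) E4,
      pd_cmul (Complex.I / (ℏ:ℂ)) hg E4,
      pd_add (contDiff_const.mul hf) (sm_cS.mul (sm_pd hf E4)) E4,
      pd_cmul ((E4.2.2.2:ℝ):ℂ) hf E4,
      pd_mul sm_cS (sm_pd hf E4) E4, pd_cS E4,
      show ((E4.2.2.2:ℝ):ℂ) = 1 by norm_num [E4]]
  funext x; simp only []; ring

lemma pd44_Dq (hf : ContDiff ℝ ∞ f) :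
    pd E4 (pd E4 (Dq ℏ f)) = fun x => pd E4 (pd E4 (pd E2 f)) x
      - Complex.I / (ℏ:ℂ) * ((x.1:ℂ) * pd E4 (pd E4 f) x)
      - pd E4 (pd E4 (pd E4 f)) x := by
  have hg : ContDiff ℝ ∞ (fun x : PQTS => ((E4.1:ℝ):ℂ) * f x + (x.1:ℂ) * pd E4 f x) :=
    (contDiff_const.mul hf).add (sm_cp.mul (sm_pd hf E4))
  rw [pd_Dq hf E4,
      pd_sub ((sm_pd (sm_pd hf E2) E4).sub (contDiff_const.mul hg)) (sm_pd (sm_pd hf E4) E4) E4,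
      pd_sub (sm_pd (sm_pd hf E2) E4) (contDiff_const.mul hg) E4,
      pd_cmul (Complex.I / (ℏ:ℂ)) hg E4,
      pd_add (contDiff_const.mul hf) (sm_cp.mul (sm_pd hf E4)) E4,
      pd_cmul ((E4.1:ℝ):ℂ) hf E4,
      pd_mul sm_cp (sm_pd hf E4) E4, pd_cp E4,
      show ((E4.1:ℝ):ℂ) = 0 by norm_num [E4]]
  funext x; simp only []; ring

end ops2


/-- The quantization connection for `H = p²/2 + V(q)` is flat:
its components `D_p`, `D_q`, `D_t` pairwise commute on smooth functions. -/
theorem quantization_connection_is_flat (ℏ : ℝ) (hℏ : 0 < ℏ) (V : ℝ → ℝ)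
    (hV : ContDiff ℝ (⊤ : ℕ∞) V) :
    ∀ Ψ : PQTS → ℂ, ContDiff ℝ (⊤ : ℕ∞) Ψ →
      Dp ℏ (Dq ℏ Ψ) = Dq ℏ (Dp ℏ Ψ) ∧
      Dp ℏ (Dt ℏ V Ψ) = Dt ℏ V (Dp ℏ Ψ) ∧
      Dq ℏ (Dt ℏ V Ψ) = Dt ℏ V (Dq ℏ Ψ) := by
  intro Ψ hΨt
  have hΨ : ContDiff ℝ ∞ Ψ := hΨt.of_le (by simp)
  have hV' : ContDiff ℝ ∞ V := hV.of_le (by simp)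
  have hne : (ℏ:ℂ) ≠ 0 := by exact_mod_cast hℏ.ne'
  have pE11 : ((E1.1:ℝ):ℂ) = 1 := by norm_num [E1]
  have pE21 : ((E2.1:ℝ):ℂ) = 0 := by norm_num [E2]
  have pE31 : ((E3.1:ℝ):ℂ) = 0 := by norm_num [E3]
  have pE41 : ((E4.1:ℝ):ℂ) = 0 := by norm_num [E4]
  have pE1S : ((E1.2.2.2:ℝ):ℂ) = 0 := by norm_num [E1]
  have pE2S : ((E2.2.2.2:ℝ):ℂ) = 0 := by norm_num [E2]
  have pE3S : ((E3.2.2.2:ℝ):ℂ) = 0 := by norm_num [E3]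
  have pE4S : ((E4.2.2.2:ℝ):ℂ) = 1 := by norm_num [E4]
  have qE1 : ((E1.2.1 + E1.2.2.2:ℝ):ℂ) = 0 := by norm_num [E1]
  have qE2 : ((E2.2.1 + E2.2.2.2:ℝ):ℂ) = 1 := by norm_num [E2]
  have qE3 : ((E3.2.1 + E3.2.2.2:ℝ):ℂ) = 0 := by norm_num [E3]
  have qE4 : ((E4.2.1 + E4.2.2.2:ℝ):ℂ) = 1 := by norm_num [E4]
  have hc : Complex.I / (ℏ:ℂ) * (ℏ:ℂ) = Complex.I := by field_simp
  refine ⟨?_, ?_, ?_⟩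
  · rw [Dp_eq (f := Dq ℏ Ψ), Dq_eq (f := Dp ℏ Ψ), pd_Dq hΨ E1, pd_Dp hΨ E2, pd_Dp hΨ E4,
        pd_swap hΨ E2 E1, pd_swap hΨ E4 E1]
    simp only [Dq_eq, Dp_eq]
    funext x
    simp only [pE11, pE21, pE41, pE1S, pE2S, pE4S]
    ring_nf
  · rw [Dp_eq (f := Dt ℏ V Ψ), Dt_eq (f := Dp ℏ Ψ), pd_Dt hV' hΨ E1, pd_Hop hV' hΨ E1,
        pd_Dp hΨ E3, Hop_eq (f := Dp ℏ Ψ), pd44_Dp hΨ, pd_Dp hΨ E4,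
        pd_swap hΨ E3 E1, pd_swap hΨ E4 E1, pd_swap (sm_pd hΨ E4) E4 E1]
    simp only [Dt_eq, Hop_eq, Dp_eq]
    funext x
    simp only [pE11, pE1S, pE3S, pE4S, qE1]
    linear_combination (Complex.I / (ℏ:ℂ) * (Complex.I * (x.1:ℂ) * Ψ x
      + (ℏ:ℂ) * pd E4 Ψ x)) * hc + (Complex.I * (x.1:ℂ) * Ψ x / (ℏ:ℂ)) * Complex.I_sq
  · rw [Dq_eq (f := Dt ℏ V Ψ), Dt_eq (f := Dq ℏ Ψ), pd_Dt hV' hΨ E2, pd_Dt hV' hΨ E4,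
        pd_Hop hV' hΨ E2, pd_Hop hV' hΨ E4,
        pd_Dq hΨ E3, Hop_eq (f := Dq ℏ Ψ), pd44_Dq hΨ, pd_Dq hΨ E4,
        pd_swap hΨ E3 E2, pd_swap hΨ E4 E2, pd_swap (sm_pd hΨ E4) E4 E2, pd_swap hΨ E4 E3]
    simp only [Dt_eq, Hop_eq, Dq_eq]
    funext x
    simp only [pE21, pE31, pE41, pE2S, pE3S, pE4S, qE2, qE3, qE4]
    ring
end

section
/- On the open set U = {(p,q,t) ∈ ℝ³ : q ≠ 0}, define the smooth functions π(p,q,t) = (p²+q²)/2, χ(p,q,t) = −t − arctan(p/q), and ψ(p,q,t) = −pq/2. Then for every x = (p,q,t) ∈ U and every v ∈ ℝ³: p·v_q − ((p²+q²)/2)·v_t = π(x)·(Dχ(x))(v) − (Dψ(x))(v), where Dχ(x) and Dψ(x) denote the Fréchet derivatives. That is, the harmonic oscillator contact form p dq − ((p²+q²)/2) dt equals π dχ − dψ on U. -/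
/-! `arctan (p / q)` has differential `(q dp - p dq) / (p² + q²)`, so
`π dχ = -π dt - (q dp - p dq) / 2` while `dψ = -(q dp + p dq) / 2`;
their difference is `p dq - π dt`. -/

open ContinuousLinearMap

theorem HasFDerivAt.arctan_div {E : Type*} [NormedAddCommGroup E] [NormedSpace ℝ E]
    {f g : E → ℝ} {f' g' : E →L[ℝ] ℝ} {x : E} (hf : HasFDerivAt f f' x)
    (hg : HasFDerivAt g g' x) (hx : g x ≠ 0) :
    HasFDerivAt (fun y => Real.arctan (f y / g y))
      ((f x ^ 2 + g x ^ 2)⁻¹ • (g x • f' - f x • g')) x := by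
  have hinv : HasFDerivAt (fun y => (g y)⁻¹) (-(g x ^ 2)⁻¹ • g') x :=
    (hasDerivAt_inv hx).comp_hasFDerivAt x hg
  have hquot : HasFDerivAt (fun y => f y / g y) (f x • -(g x ^ 2)⁻¹ • g' + (g x)⁻¹ • f') x :=
    hf.fun_mul hinv
  refine hquot.arctan.congr_fderiv ?_
  ext v
  simp only [one_div, smul_add, add_apply, smul_apply, smul_eq_mul, neg_mul, mul_neg, sub_apply]
  field_simp
  ring

theorem fderiv_neg_mul_div_two_apply (x v : ℝ × ℝ × ℝ) :
    fderiv ℝ (fun y : ℝ × ℝ × ℝ => -(y.1 * y.2.1) / 2) x v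
      = -(x.2.1 * v.1 + x.1 * v.2.1) / 2 := by
  have h := (hasFDerivAt_fst.fun_mul (hasFDerivAt_snd (𝕜 := ℝ) (p := x)).fst).fun_neg.mul_const
    (2 : ℝ)⁻¹
  simp only [← div_eq_mul_inv] at h
  rw [h.fderiv]
  simp only [smul_apply, neg_apply, add_apply, comp_apply, coe_fst', coe_snd', smul_eq_mul]
  ring

theorem fderiv_neg_sub_arctan_div_apply {x : ℝ × ℝ × ℝ} (hq : x.2.1 ≠ 0) (v : ℝ × ℝ × ℝ) :
    fderiv ℝ (fun y : ℝ × ℝ × ℝ => -y.2.2 - Real.arctan (y.1 / y.2.1)) x v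
      = -v.2.2 - (x.2.1 * v.1 - x.1 * v.2.1) / (x.1 ^ 2 + x.2.1 ^ 2) := by
  have h := (hasFDerivAt_snd (p := x)).snd.fun_neg.fun_sub
    (hasFDerivAt_fst.arctan_div hasFDerivAt_snd.fst hq)
  rw [h.fderiv]
  simp only [sub_apply, neg_apply, comp_apply, coe_snd', smul_apply, coe_fst', smul_eq_mul]
  ring

/-- On `U = {(p,q,t) : q ≠ 0}`, with `π = (p²+q²)/2`,
`χ = -t - arctan(p/q)` and `ψ = -pq/2`, the harmonic oscillator contact form
`p dq - ((p²+q²)/2) dt` equals `π dχ - dψ`: for every `x ∈ U` and every tangent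
vector `v`, `p v_q - ((p²+q²)/2) v_t = π(x) (Dχ(x))(v) - (Dψ(x))(v)`.
Points are modelled as `x : ℝ × ℝ × ℝ` with `x.1 = p`, `x.2.1 = q`, `x.2.2 = t`. -/
theorem harmonic_oscillator_darboux_form :
    ∀ x : ℝ × ℝ × ℝ, x.2.1 ≠ 0 → ∀ v : ℝ × ℝ × ℝ,
      x.1 * v.2.1 - ((x.1 ^ 2 + x.2.1 ^ 2) / 2) * v.2.2 =
        ((x.1 ^ 2 + x.2.1 ^ 2) / 2) *
            fderiv ℝ (fun y : ℝ × ℝ × ℝ => -y.2.2 - Real.arctan (y.1 / y.2.1)) x v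
          - fderiv ℝ (fun y : ℝ × ℝ × ℝ => -(y.1 * y.2.1) / 2) x v := by
  intro x hq v
  rw [fderiv_neg_sub_arctan_div_apply hq, fderiv_neg_mul_div_two_apply]
  field_simp
  ring
end

section
/- Fix ħ > 0. For smooth Ψ : ℝ⁴ → ℂ with coordinates (π,χ,ψ,S), define the components of the Darboux connection: D_π Ψ = ∂Ψ/∂π − (i/ħ)SΨ, D_χ Ψ = ∂Ψ/∂χ − (i/ħ)πΨ + ∂Ψ/∂S, and D_ψ Ψ = ∂Ψ/∂ψ + (i/ħ)Ψ. Then these three operators pairwise commute on smooth functions: D_π(D_χΨ) = D_χ(D_πΨ), D_π(D_ψΨ) = D_ψ(D_πΨ), and D_χ(D_ψΨ) = D_ψ(D_χΨ) for every smooth Ψ. -/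
/-- Coordinates `(π, χ, ψ, S)` on Darboux phase-spacetime times the fiber. -/
abbrev PCPS := ℝ × ℝ × ℝ × ℝ

/-- The `π`-component of the Darboux connection: `D_π Ψ = ∂Ψ/∂π - (i/ℏ) S Ψ`. -/
noncomputable def Dpi (ℏ : ℝ) (Ψ : PCPS → ℂ) : PCPS → ℂ := fun x =>
  fderiv ℝ Ψ x (1, 0, 0, 0) - (Complex.I / (ℏ : ℂ)) * (x.2.2.2 : ℂ) * Ψ x

/-- The `χ`-component of the Darboux connection:
`D_χ Ψ = ∂Ψ/∂χ - (i/ℏ) π Ψ + ∂Ψ/∂S`. -/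
noncomputable def Dchi (ℏ : ℝ) (Ψ : PCPS → ℂ) : PCPS → ℂ := fun x =>
  fderiv ℝ Ψ x (0, 1, 0, 0) - (Complex.I / (ℏ : ℂ)) * (x.1 : ℂ) * Ψ x
    + fderiv ℝ Ψ x (0, 0, 0, 1)

/-- The `ψ`-component of the Darboux connection: `D_ψ Ψ = ∂Ψ/∂ψ + (i/ℏ) Ψ`. -/
noncomputable def Dpsi (ℏ : ℝ) (Ψ : PCPS → ℂ) : PCPS → ℂ := fun x =>
  fderiv ℝ Ψ x (0, 0, 1, 0) + (Complex.I / (ℏ : ℂ)) * Ψ x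

section aux
variable {Ψ : PCPS → ℂ}

/-- The first coordinate, as a continuous linear map into `ℂ`. -/
noncomputable def A1 : PCPS →L[ℝ] ℂ :=
  Complex.ofRealCLM.comp (ContinuousLinearMap.fst ℝ ℝ (ℝ × ℝ × ℝ))

/-- The fourth coordinate, as a continuous linear map into `ℂ`. -/
noncomputable def A4 : PCPS →L[ℝ] ℂ :=
  Complex.ofRealCLM.comp ((ContinuousLinearMap.snd ℝ ℝ ℝ).comp
    ((ContinuousLinearMap.snd ℝ ℝ (ℝ × ℝ)).comp (ContinuousLinearMap.snd ℝ ℝ (ℝ × ℝ × ℝ))))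

lemma hP (h : ContDiff ℝ (⊤ : ℕ∞) Ψ) (v : PCPS) :
    ContDiff ℝ (⊤ : ℕ∞) (fun y => fderiv ℝ Ψ y v) :=
  (h.fderiv_right (by simp)).clm_apply contDiff_const

/-- Clairaut / Schwarz symmetry of second derivatives for smooth functions. -/
lemma fderiv_P (h : ContDiff ℝ (⊤ : ℕ∞) Ψ) (v u : PCPS) (x : PCPS) :
    fderiv ℝ (fun y => fderiv ℝ Ψ y v) x u = fderiv ℝ (fun y => fderiv ℝ Ψ y u) x v := by
  have hd : DifferentiableAt ℝ (fderiv ℝ Ψ) x :=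
    ((h.fderiv_right ((by norm_num; exact WithTop.coe_le_coe.mpr (le_top : (2 : ℕ∞) ≤ ⊤)) : (1 : WithTop ℕ∞) + 1 ≤ ((⊤ : ℕ∞) : WithTop ℕ∞))).differentiable one_ne_zero) x
  have hsymm : fderiv ℝ (fderiv ℝ Ψ) x u v = fderiv ℝ (fderiv ℝ Ψ) x v u :=
    (h.contDiffAt.isSymmSndFDerivAt (by norm_num; exact WithTop.coe_le_coe.mpr (le_top : (2 : ℕ∞) ≤ ⊤))).eq u v
  rw [fderiv_clm_apply hd (differentiableAt_const v),
    fderiv_clm_apply hd (differentiableAt_const u)]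
  simp [hsymm]

lemma fderiv_lin_mul (h : ContDiff ℝ (⊤ : ℕ∞) Ψ) (c : ℂ) (A : PCPS →L[ℝ] ℂ) (x u : PCPS) :
    fderiv ℝ (fun y => c * A y * Ψ y) x u
      = c * A u * Ψ x + c * A x * fderiv ℝ Ψ x u := by
  have h1 : HasFDerivAt (fun y : PCPS => c * A y) (c • A) x := by
    simpa using (A.hasFDerivAt (x := x)).const_mul c
  have h2 := (h.differentiable (by simp) x).hasFDerivAt
  rw [HasFDerivAt.fderiv (f := fun y => c * A y * Ψ y) (h1.mul h2)]
  simp [mul_comm, mul_assoc, mul_left_comm]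
  ring

lemma diff_lin_mul (h : ContDiff ℝ (⊤ : ℕ∞) Ψ) (c : ℂ) (A : PCPS →L[ℝ] ℂ) :
    ContDiff ℝ (⊤ : ℕ∞) (fun y => c * A y * Ψ y) :=
  (contDiff_const.mul A.contDiff).mul h

/-- Expansion of the derivative of a `Dpi`-shaped expression. -/
lemma fderiv_shapePi (h : ContDiff ℝ (⊤ : ℕ∞) Ψ) (c : ℂ) (A : PCPS →L[ℝ] ℂ) (v x u : PCPS) :
    fderiv ℝ (fun y => fderiv ℝ Ψ y v - c * A y * Ψ y) x u
      = fderiv ℝ (fun y => fderiv ℝ Ψ y v) x u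
        - (c * A u * Ψ x + c * A x * fderiv ℝ Ψ x u) := by
  have d1 := (((hP h v).differentiable (by simp)) x).hasFDerivAt
  have d2 := (((diff_lin_mul h c A).differentiable (by simp)) x).hasFDerivAt
  rw [HasFDerivAt.fderiv (f := fun y => fderiv ℝ Ψ y v - c * A y * Ψ y) (d1.sub d2)]
  simp [fderiv_lin_mul h c A]

/-- Expansion of the derivative of a `Dchi`-shaped expression. -/
lemma fderiv_shapeChi (h : ContDiff ℝ (⊤ : ℕ∞) Ψ) (c : ℂ) (A : PCPS →L[ℝ] ℂ) (v w x u : PCPS) :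
    fderiv ℝ (fun y => fderiv ℝ Ψ y v - c * A y * Ψ y + fderiv ℝ Ψ y w) x u
      = fderiv ℝ (fun y => fderiv ℝ Ψ y v) x u
        - (c * A u * Ψ x + c * A x * fderiv ℝ Ψ x u)
        + fderiv ℝ (fun y => fderiv ℝ Ψ y w) x u := by
  have d1 := (((hP h v).differentiable (by simp)) x).hasFDerivAt
  have d2 := (((diff_lin_mul h c A).differentiable (by simp)) x).hasFDerivAt
  have d3 := (((hP h w).differentiable (by simp)) x).hasFDerivAt
  rw [HasFDerivAt.fderiv (f := fun y => fderiv ℝ Ψ y v - c * A y * Ψ y + fderiv ℝ Ψ y w)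
    ((d1.sub d2).add d3)]
  simp [fderiv_lin_mul h c A]

/-- Expansion of the derivative of a `Dpsi`-shaped expression. -/
lemma fderiv_shapePsi (h : ContDiff ℝ (⊤ : ℕ∞) Ψ) (c : ℂ) (v x u : PCPS) :
    fderiv ℝ (fun y => fderiv ℝ Ψ y v + c * Ψ y) x u
      = fderiv ℝ (fun y => fderiv ℝ Ψ y v) x u + c * fderiv ℝ Ψ x u := by
  have d1 := (((hP h v).differentiable (by simp)) x).hasFDerivAt
  have d2 : HasFDerivAt (fun y => c * Ψ y) (c • fderiv ℝ Ψ x) x :=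
    (h.differentiable (by simp) x).hasFDerivAt.const_smul c
  rw [HasFDerivAt.fderiv (f := fun y => fderiv ℝ Ψ y v + c * Ψ y) (d1.add d2)]
  simp

end aux

/-- the Darboux connection is flat: its components `D_π`, `D_χ`, `D_ψ`
pairwise commute on smooth functions. -/
theorem darboux_connection_is_flat (ℏ : ℝ) (hℏ : 0 < ℏ) :
    ∀ Ψ : PCPS → ℂ, ContDiff ℝ (⊤ : ℕ∞) Ψ →
      Dpi ℏ (Dchi ℏ Ψ) = Dchi ℏ (Dpi ℏ Ψ) ∧
      Dpi ℏ (Dpsi ℏ Ψ) = Dpsi ℏ (Dpi ℏ Ψ) ∧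
      Dchi ℏ (Dpsi ℏ Ψ) = Dpsi ℏ (Dchi ℏ Ψ) := by
  intro Ψ h
  have hDpi : Dpi ℏ Ψ
      = fun y => fderiv ℝ Ψ y (1, 0, 0, 0) - (Complex.I / (ℏ : ℂ)) * A4 y * Ψ y := rfl
  have hDchi : Dchi ℏ Ψ
      = fun y => fderiv ℝ Ψ y (0, 1, 0, 0) - (Complex.I / (ℏ : ℂ)) * A1 y * Ψ y
        + fderiv ℝ Ψ y (0, 0, 0, 1) := rfl
  have hDpsi : Dpsi ℏ Ψ
      = fun y => fderiv ℝ Ψ y (0, 0, 1, 0) + (Complex.I / (ℏ : ℂ)) * Ψ y := rfl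
  refine ⟨?_, ?_, ?_⟩
  · funext x
    have L : Dpi ℏ (Dchi ℏ Ψ) x
        = fderiv ℝ (Dchi ℏ Ψ) x (1, 0, 0, 0)
          - (Complex.I / (ℏ : ℂ)) * A4 x * Dchi ℏ Ψ x := rfl
    have R : Dchi ℏ (Dpi ℏ Ψ) x
        = fderiv ℝ (Dpi ℏ Ψ) x (0, 1, 0, 0)
          - (Complex.I / (ℏ : ℂ)) * A1 x * Dpi ℏ Ψ x
          + fderiv ℝ (Dpi ℏ Ψ) x (0, 0, 0, 1) := rfl
    rw [L, R, hDchi, hDpi,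
      fderiv_shapeChi h _ A1 _ _ x (1, 0, 0, 0),
      fderiv_shapePi h _ A4 _ x (0, 1, 0, 0),
      fderiv_shapePi h _ A4 _ x (0, 0, 0, 1),
      fderiv_P h (0, 1, 0, 0) (1, 0, 0, 0) x,
      fderiv_P h (0, 0, 0, 1) (1, 0, 0, 0) x]
    simp only [A1, A4, ContinuousLinearMap.comp_apply, ContinuousLinearMap.coe_fst',
      ContinuousLinearMap.coe_snd', Complex.ofRealCLM_apply]
    push_cast
    ring
  · funext x
    have L : Dpi ℏ (Dpsi ℏ Ψ) x
        = fderiv ℝ (Dpsi ℏ Ψ) x (1, 0, 0, 0)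
          - (Complex.I / (ℏ : ℂ)) * A4 x * Dpsi ℏ Ψ x := rfl
    have R : Dpsi ℏ (Dpi ℏ Ψ) x
        = fderiv ℝ (Dpi ℏ Ψ) x (0, 0, 1, 0)
          + (Complex.I / (ℏ : ℂ)) * Dpi ℏ Ψ x := rfl
    rw [L, R, hDpsi, hDpi,
      fderiv_shapePsi h _ _ x (1, 0, 0, 0),
      fderiv_shapePi h _ A4 _ x (0, 0, 1, 0),
      fderiv_P h (0, 0, 1, 0) (1, 0, 0, 0) x]
    simp only [A1, A4, ContinuousLinearMap.comp_apply, ContinuousLinearMap.coe_fst',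
      ContinuousLinearMap.coe_snd', Complex.ofRealCLM_apply]
    push_cast
    ring
  · funext x
    have L : Dchi ℏ (Dpsi ℏ Ψ) x
        = fderiv ℝ (Dpsi ℏ Ψ) x (0, 1, 0, 0)
          - (Complex.I / (ℏ : ℂ)) * A1 x * Dpsi ℏ Ψ x
          + fderiv ℝ (Dpsi ℏ Ψ) x (0, 0, 0, 1) := rfl
    have R : Dpsi ℏ (Dchi ℏ Ψ) x
        = fderiv ℝ (Dchi ℏ Ψ) x (0, 0, 1, 0)
          + (Complex.I / (ℏ : ℂ)) * Dchi ℏ Ψ x := rfl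
    rw [L, R, hDpsi, hDchi,
      fderiv_shapePsi h _ _ x (0, 1, 0, 0),
      fderiv_shapePsi h _ _ x (0, 0, 0, 1),
      fderiv_shapeChi h _ A1 _ _ x (0, 0, 1, 0),
      fderiv_P h (0, 0, 1, 0) (0, 1, 0, 0) x,
      fderiv_P h (0, 0, 1, 0) (0, 0, 0, 1) x]
    simp only [A1, A4, ContinuousLinearMap.comp_apply, ContinuousLinearMap.coe_fst',
      ContinuousLinearMap.coe_snd', Complex.ofRealCLM_apply]
    push_cast
    ring
end

section
/- Fix ħ > 0. On smooth Ψ : ℝ⁴ → ℂ with coordinates (π,χ,ψ,S), define the Darboux connection components D_π Ψ = ∂Ψ/∂π − (i/ħ)SΨ, D_χ Ψ = ∂Ψ/∂χ − (i/ħ)πΨ + ∂Ψ/∂S, D_ψ Ψ = ∂Ψ/∂ψ + (i/ħ)Ψ, and the operators XΨ := (S − χ)·Ψ and YΨ := −iħ·∂Ψ/∂S − π·Ψ. Then X and Y commute with each of D_π, D_χ, D_ψ: for every smooth Ψ, D_•(XΨ) = X(D_•Ψ) and D_•(YΨ) = Y(D_•Ψ) for • ∈ {π, χ, ψ}. -/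
/-- The operator `X = Ŝ - χ`: `XΨ = (S - χ) Ψ`. -/
noncomputable def Xop (Ψ : PCPS → ℂ) : PCPS → ℂ := fun x =>
  ((x.2.2.2 : ℂ) - (x.2.1 : ℂ)) * Ψ x

/-- The operator `Y = P̂ - π`: `YΨ = -iℏ ∂Ψ/∂S - π Ψ`. -/
noncomputable def Yop (ℏ : ℝ) (Ψ : PCPS → ℂ) : PCPS → ℂ := fun x =>
  -(Complex.I * (ℏ : ℂ)) * fderiv ℝ Ψ x (0, 0, 0, 1) - (x.1 : ℂ) * Ψ x

/- ### Auxiliary machinery -/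

/-- The coordinate `π` as a continuous linear map into `ℂ`. -/
noncomputable def cP : PCPS →L[ℝ] ℂ :=
  Complex.ofRealCLM.comp (ContinuousLinearMap.fst ℝ ℝ (ℝ × ℝ × ℝ))

/-- The coordinate `χ` as a continuous linear map into `ℂ`. -/
noncomputable def cChi : PCPS →L[ℝ] ℂ :=
  Complex.ofRealCLM.comp ((ContinuousLinearMap.fst ℝ ℝ (ℝ × ℝ)).comp
    (ContinuousLinearMap.snd ℝ ℝ (ℝ × ℝ × ℝ)))

/-- The coordinate `S` as a continuous linear map into `ℂ`. -/
noncomputable def cS : PCPS →L[ℝ] ℂ :=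
  Complex.ofRealCLM.comp ((ContinuousLinearMap.snd ℝ ℝ ℝ).comp
    ((ContinuousLinearMap.snd ℝ ℝ (ℝ × ℝ)).comp (ContinuousLinearMap.snd ℝ ℝ (ℝ × ℝ × ℝ))))

@[simp] lemma cP_apply (y : PCPS) : cP y = (y.1 : ℂ) := rfl
@[simp] lemma cChi_apply (y : PCPS) : cChi y = (y.2.1 : ℂ) := rfl
@[simp] lemma cS_apply (y : PCPS) : cS y = (y.2.2.2 : ℂ) := rfl

/-- Product rule for a continuous-linear coordinate multiplier. -/
lemma fderiv_clm_mul (c : PCPS →L[ℝ] ℂ) {f : PCPS → ℂ} {x : PCPS}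
    (hf : DifferentiableAt ℝ f x) (v : PCPS) :
    fderiv ℝ (fun y => c y * f y) x v = c x * fderiv ℝ f x v + f x * c v := by
  rw [fderiv_fun_mul c.differentiableAt hf]
  simp [c.fderiv, smul_eq_mul]

section Smooth

variable {Ψ : PCPS → ℂ}

lemma hd' (hΨ : ContDiff ℝ (⊤ : ℕ∞) Ψ) : Differentiable ℝ Ψ := hΨ.differentiable (by simp)

lemma hg' (hΨ : ContDiff ℝ (⊤ : ℕ∞) Ψ) (w : PCPS) : Differentiable ℝ (fun y => fderiv ℝ Ψ y w) :=
  ((hΨ.fderiv_right (m := (⊤ : ℕ∞)) (by simp)).differentiable (by simp)).clm_apply (differentiable_const w)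

/-- Clairaut / symmetry of the second derivative. -/
lemma fderiv_swap (hΨ : ContDiff ℝ (⊤ : ℕ∞) Ψ) (x v w : PCPS) :
    fderiv ℝ (fun y => fderiv ℝ Ψ y w) x v = fderiv ℝ (fun y => fderiv ℝ Ψ y v) x w := by
  have hF : Differentiable ℝ (fderiv ℝ Ψ) :=
    (hΨ.fderiv_right (m := (⊤ : ℕ∞)) (by simp)).differentiable (by simp)
  have h1 : ∀ u z : PCPS, fderiv ℝ (fun y => fderiv ℝ Ψ y u) x z
      = fderiv ℝ (fderiv ℝ Ψ) x z u := by
    intro u z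
    rw [fderiv_clm_apply hF.differentiableAt (differentiableAt_const u)]
    simp
  rw [h1, h1]
  exact (hΨ.contDiffAt.isSymmSndFDerivAt (by rw [minSmoothness_of_isRCLikeNormedField]; exact WithTop.coe_le_coe.mpr (le_top : (2 : ℕ∞) ≤ ⊤))) v w

lemma dPmul (hΨ : ContDiff ℝ (⊤ : ℕ∞) Ψ) (x v : PCPS) :
    fderiv ℝ (fun y : PCPS => (y.1 : ℂ) * Ψ y) x v
      = (x.1 : ℂ) * fderiv ℝ Ψ x v + Ψ x * (v.1 : ℂ) := by
  simpa using fderiv_clm_mul cP (hd' hΨ).differentiableAt v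

lemma dSmul (hΨ : ContDiff ℝ (⊤ : ℕ∞) Ψ) (x v : PCPS) :
    fderiv ℝ (fun y : PCPS => (y.2.2.2 : ℂ) * Ψ y) x v
      = (x.2.2.2 : ℂ) * fderiv ℝ Ψ x v + Ψ x * (v.2.2.2 : ℂ) := by
  simpa using fderiv_clm_mul cS (hd' hΨ).differentiableAt v

lemma dXop (hΨ : ContDiff ℝ (⊤ : ℕ∞) Ψ) (x v : PCPS) :
    fderiv ℝ (Xop Ψ) x v
      = ((x.2.2.2 : ℂ) - (x.2.1 : ℂ)) * fderiv ℝ Ψ x v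
        + Ψ x * ((v.2.2.2 : ℂ) - (v.2.1 : ℂ)) := by
  unfold Xop
  have := fderiv_clm_mul (cS - cChi) (x := x) (hd' hΨ).differentiableAt v
  simpa [ContinuousLinearMap.sub_apply] using this

lemma dYop (hΨ : ContDiff ℝ (⊤ : ℕ∞) Ψ) (ℏ : ℝ) (x v : PCPS) :
    fderiv ℝ (Yop ℏ Ψ) x v
      = -(Complex.I * (ℏ : ℂ)) * fderiv ℝ (fun y => fderiv ℝ Ψ y v) x (0, 0, 0, 1)
        - ((x.1 : ℂ) * fderiv ℝ Ψ x v + Ψ x * (v.1 : ℂ)) := by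
  have h1 : DifferentiableAt ℝ
      (fun y : PCPS => -(Complex.I * (ℏ : ℂ)) * fderiv ℝ Ψ y ((0, 0, 0, 1) : PCPS)) x :=
    ((hg' hΨ (0, 0, 0, 1)).differentiableAt).const_mul _
  have h2 : DifferentiableAt ℝ (fun y : PCPS => (y.1 : ℂ) * Ψ y) x :=
    (cP.differentiable.mul (hd' hΨ)).differentiableAt
  unfold Yop
  rw [fderiv_fun_sub h1 h2, ContinuousLinearMap.sub_apply,
    fderiv_const_mul (hg' hΨ (0, 0, 0, 1)).differentiableAt,
    ContinuousLinearMap.smul_apply, smul_eq_mul, dPmul hΨ,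
    fderiv_swap hΨ x v (0, 0, 0, 1)]

lemma dDpi (hΨ : ContDiff ℝ (⊤ : ℕ∞) Ψ) (ℏ : ℝ) (x v : PCPS) :
    fderiv ℝ (Dpi ℏ Ψ) x v
      = fderiv ℝ (fun y => fderiv ℝ Ψ y ((1, 0, 0, 0) : PCPS)) x v
        - Complex.I / (ℏ : ℂ)
          * ((x.2.2.2 : ℂ) * fderiv ℝ Ψ x v + Ψ x * (v.2.2.2 : ℂ)) := by
  have h2 : Differentiable ℝ (fun y : PCPS => (y.2.2.2 : ℂ) * Ψ y) :=
    cS.differentiable.mul (hd' hΨ)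
  unfold Dpi
  simp only [mul_assoc]
  rw [fderiv_fun_sub (hg' hΨ (1, 0, 0, 0)).differentiableAt (h2.const_mul _).differentiableAt,
    ContinuousLinearMap.sub_apply, fderiv_const_mul h2.differentiableAt,
    ContinuousLinearMap.smul_apply, smul_eq_mul, dSmul hΨ]

lemma dDchi (hΨ : ContDiff ℝ (⊤ : ℕ∞) Ψ) (ℏ : ℝ) (x v : PCPS) :
    fderiv ℝ (Dchi ℏ Ψ) x v
      = fderiv ℝ (fun y => fderiv ℝ Ψ y ((0, 1, 0, 0) : PCPS)) x v
        - Complex.I / (ℏ : ℂ) * ((x.1 : ℂ) * fderiv ℝ Ψ x v + Ψ x * (v.1 : ℂ))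
        + fderiv ℝ (fun y => fderiv ℝ Ψ y ((0, 0, 0, 1) : PCPS)) x v := by
  have h2 : Differentiable ℝ (fun y : PCPS => (y.1 : ℂ) * Ψ y) :=
    cP.differentiable.mul (hd' hΨ)
  unfold Dchi
  simp only [mul_assoc]
  rw [fderiv_fun_add
      (f := fun y : PCPS => fderiv ℝ Ψ y (0, 1, 0, 0) - Complex.I / (ℏ : ℂ) * ((y.1 : ℂ) * Ψ y))
      (((hg' hΨ (0, 1, 0, 0)).sub (h2.const_mul _)).differentiableAt)
      (hg' hΨ (0, 0, 0, 1)).differentiableAt,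
    ContinuousLinearMap.add_apply,
    fderiv_fun_sub (hg' hΨ (0, 1, 0, 0)).differentiableAt (h2.const_mul _).differentiableAt,
    ContinuousLinearMap.sub_apply, fderiv_const_mul h2.differentiableAt,
    ContinuousLinearMap.smul_apply, smul_eq_mul, dPmul hΨ]

lemma dDpsi (hΨ : ContDiff ℝ (⊤ : ℕ∞) Ψ) (ℏ : ℝ) (x v : PCPS) :
    fderiv ℝ (Dpsi ℏ Ψ) x v
      = fderiv ℝ (fun y => fderiv ℝ Ψ y ((0, 0, 1, 0) : PCPS)) x v
        + Complex.I / (ℏ : ℂ) * fderiv ℝ Ψ x v := by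
  unfold Dpsi
  rw [fderiv_fun_add (hg' hΨ (0, 0, 1, 0)).differentiableAt
      ((hd' hΨ).const_mul _).differentiableAt,
    ContinuousLinearMap.add_apply, fderiv_const_mul (hd' hΨ).differentiableAt,
    ContinuousLinearMap.smul_apply, smul_eq_mul]

end Smooth

/-- the operators `X = Ŝ - χ` and `Y = P̂ - π` commute with each of the
Darboux connection components `D_π`, `D_χ`, `D_ψ` on smooth functions. -/
theorem sxi_operators_parallel (ℏ : ℝ) (hℏ : 0 < ℏ) :
    ∀ Ψ : PCPS → ℂ, ContDiff ℝ (⊤ : ℕ∞) Ψ →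
      (Dpi ℏ (Xop Ψ) = Xop (Dpi ℏ Ψ) ∧
       Dchi ℏ (Xop Ψ) = Xop (Dchi ℏ Ψ) ∧
       Dpsi ℏ (Xop Ψ) = Xop (Dpsi ℏ Ψ)) ∧
      (Dpi ℏ (Yop ℏ Ψ) = Yop ℏ (Dpi ℏ Ψ) ∧
       Dchi ℏ (Yop ℏ Ψ) = Yop ℏ (Dchi ℏ Ψ) ∧
       Dpsi ℏ (Yop ℏ Ψ) = Yop ℏ (Dpsi ℏ Ψ)) := by
  intro Ψ hΨ
  have hne : (ℏ : ℂ) ≠ 0 := by exact_mod_cast hℏ.ne'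
  refine ⟨⟨?_, ?_, ?_⟩, ?_, ?_, ?_⟩
  · funext x
    simp only [Dpi, Xop]
    rw [dXop hΨ]
    norm_num
    ring
  · funext x
    simp only [Dchi, Xop]
    rw [dXop hΨ, dXop hΨ]
    norm_num
    ring
  · funext x
    simp only [Dpsi, Xop]
    rw [dXop hΨ]
    norm_num
    ring
  · funext x
    simp only [Dpi, Yop]
    rw [dYop hΨ ℏ, dDpi hΨ ℏ]
    norm_num
    field_simp
    try ring_nf
    try (simp only [Complex.I_sq]; ring_nf)
  · funext x
    simp only [Dchi, Yop]
    rw [dYop hΨ ℏ, dYop hΨ ℏ, dDchi hΨ ℏ]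
    norm_num
    field_simp
    try ring_nf
    try (simp only [Complex.I_sq]; ring_nf)
  · funext x
    simp only [Dpsi, Yop]
    rw [dYop hΨ ℏ, dDpsi hΨ ℏ]
    norm_num
    field_simp
    try ring_nf
    try (simp only [Complex.I_sq]; ring_nf)
end

section
/- Fix ħ > 0 and π₀ ∈ ℝ. Let ψ : ℝ → ℂ be smooth and let Ψ : ℝ × ℝ → ℂ be smooth, satisfying the parallel transport equation ∂Ψ/∂θ(θ,S) = (iπ₀/ħ)·Ψ(θ,S) − ∂Ψ/∂S(θ,S) for all (θ,S), together with the boundary conditions Ψ(0,S) = ψ(S) and Ψ(2π,S) = ψ(S) for all S. Then ψ is quasi-periodic: ψ(S + 2π) = e^{2πiπ₀/ħ}·ψ(S) for all S ∈ ℝ. -/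
/-- trivial holonomy forces twisted-periodic boundary conditions.
If `Ψ(θ,S)` solves the parallel transport equation
`∂Ψ/∂θ = (iπ₀/ℏ) Ψ - ∂Ψ/∂S` around the cylinder's loop, with `Ψ(0,·) = Ψ(2π,·) = ψ`,
then `ψ` is quasi-periodic: `ψ(S + 2π) = exp(2πiπ₀/ℏ) ψ(S)`. -/
theorem holonomy_forces_quasi_periodicity (ℏ π₀ : ℝ) (hℏ : 0 < ℏ)
    (ψ : ℝ → ℂ) (hψ : ContDiff ℝ (⊤ : ℕ∞) ψ)
    (Ψ : ℝ × ℝ → ℂ) (hΨ : ContDiff ℝ (⊤ : ℕ∞) Ψ)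
    (hpde : ∀ θ S : ℝ, fderiv ℝ Ψ (θ, S) (1, 0) =
      (Complex.I * (π₀ : ℂ) / (ℏ : ℂ)) * Ψ (θ, S) - fderiv ℝ Ψ (θ, S) (0, 1))
    (h0 : ∀ S : ℝ, Ψ (0, S) = ψ S)
    (h1 : ∀ S : ℝ, Ψ (2 * Real.pi, S) = ψ S) :
    ∀ S : ℝ, ψ (S + 2 * Real.pi) =
      Complex.exp (2 * (Real.pi : ℂ) * Complex.I * (π₀ : ℂ) / (ℏ : ℂ)) * ψ S := by
  intro S
  set k : ℂ := Complex.I * (π₀ : ℂ) / (ℏ : ℂ) with hk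
  set f : ℝ → ℂ := fun θ => Ψ (θ, S + θ) with hf
  have hΨdiff : Differentiable ℝ Ψ := hΨ.differentiable (by simp)
  -- f' θ = k * f θ
  have hfderiv : ∀ θ : ℝ, HasDerivAt f (k * f θ) θ := by
    intro θ
    have hline : HasDerivAt (fun t : ℝ => ((t, S + t) : ℝ × ℝ)) ((1 : ℝ), (1 : ℝ)) θ := by
      have := (hasDerivAt_id θ).prodMk ((hasDerivAt_const θ S).add (hasDerivAt_id θ))
      simpa using this
    have hΨf : HasFDerivAt Ψ (fderiv ℝ Ψ (θ, S + θ)) (θ, S + θ) :=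
      (hΨdiff (θ, S + θ)).hasFDerivAt
    have hcomp := hΨf.comp_hasDerivAt θ hline
    have h11 : ((1 : ℝ), (1 : ℝ)) = ((1 : ℝ), (0 : ℝ)) + ((0 : ℝ), (1 : ℝ)) := by
      simp [Prod.ext_iff]
    have : fderiv ℝ Ψ (θ, S + θ) ((1 : ℝ), (1 : ℝ)) = k * f θ := by
      rw [h11, map_add, hpde θ (S + θ)]
      simp [hf, hk]
    rwa [this] at hcomp
  -- g θ = exp(-kθ) * f θ is constant
  have hg : ∀ θ : ℝ, deriv (fun t : ℝ => Complex.exp (-k * t) * f t) θ = 0 := by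
    intro θ
    have he : HasDerivAt (fun θ : ℝ => Complex.exp (-k * (θ : ℂ)))
        (-k * Complex.exp (-k * (θ : ℂ))) θ := by
      have hc : HasDerivAt (fun θ : ℝ => -k * (θ : ℂ)) (-k) θ := by
        simpa using (Complex.ofRealCLM.hasDerivAt (x := θ)).const_mul (-k)
      simpa [mul_comm, Function.comp_def] using (Complex.hasDerivAt_exp (-k * (θ : ℂ))).comp θ hc
    exact (he.mul (hfderiv θ)).deriv.trans (by ring)
  have hgdiff : Differentiable ℝ (fun θ : ℝ => Complex.exp (-k * θ) * f θ) := by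
    intro θ
    exact (((Complex.hasDerivAt_exp _).comp θ
      (by simpa using (Complex.ofRealCLM.hasDerivAt (x := θ)).const_mul (-k))).mul
      (hfderiv θ)).differentiableAt
  have hconst := is_const_of_deriv_eq_zero hgdiff hg (2 * Real.pi) 0
  -- unfold
  have hexp0 : Complex.exp (-k * (0 : ℝ)) = 1 := by simp
  have hf0 : f 0 = ψ S := by simp only [hf]; rw [add_zero]; exact h0 S
  have hf2 : f (2 * Real.pi) = ψ (S + 2 * Real.pi) := by
    simp only [hf]; exact h1 (S + 2 * Real.pi)
  have key : Complex.exp (-k * (2 * Real.pi : ℝ)) * ψ (S + 2 * Real.pi) = ψ S := by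
    have := hconst
    simp only [hexp0, hf0, hf2, one_mul] at this
    exact this
  have hne : Complex.exp (-k * (2 * Real.pi : ℝ)) ≠ 0 := Complex.exp_ne_zero _
  have : ψ (S + 2 * Real.pi) = (Complex.exp (-k * (2 * Real.pi : ℝ)))⁻¹ * ψ S := by
    field_simp at key ⊢
    linear_combination key
  rw [this, ← Complex.exp_neg]
  congr 1
  push_cast
  rw [hk]
  ring
end
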